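/- arXiv:2010.08086 — 2 statements merged into one kernel-verified Lean document; each statement's English description precedes it below -/
import Mathlib

section
/- Let φ₀(R) = 2R/(1 + R²) and e₂(R) = (R⁴ + 4R²·log R − 1)/(2R·(R² + 1)). Let F : (0,∞) → ℝ be continuous and integrable on (0,1]. Define w(R) = −(φ₀(R)/2)·∫₀^R F(s)·s·e₂(s) ds + e₂(R)·∫₀^R F(s)·s·φ₀(s)/2 ds. Then w is twice continuously differentiable on (0,∞) and satisfies w''(R) + w'(R)/R − (1/R² − 8/(1 + R²)²)·w(R) = F(R) for all R > 0. -/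
open Real MeasureTheory

/-- φ₀(R) = 2R/(1+R²). -/
noncomputable def phi0 (R : ℝ) : ℝ := 2*R/(1 + R^2)

/-- e₂(R) = (R⁴ + 4R² log R − 1)/(2R(R²+1)). -/
noncomputable def e2fun (R : ℝ) : ℝ := (R^4 + 4*R^2*Real.log R - 1)/(2*R*(R^2 + 1))

/-- The variation-of-parameters solution of the linearized elliptic equation with
right-hand side F. -/
noncomputable def greenSol (F : ℝ → ℝ) (R : ℝ) : ℝ :=
  -(phi0 R / 2) * (∫ s in (0:ℝ)..R, F s * s * e2fun s)
    + e2fun R * (∫ s in (0:ℝ)..R, F s * s * phi0 s / 2)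

/-!
φ₀/2 and e₂ solve the homogeneous equation y'' + y'/R − (1/R² − 8/(1+R²)²) y = 0 on (0,∞), with
R·(φ₀/2·e₂' − φ₀'/2·e₂) = 1. For any two solutions u, v of y'' + p y' − q y = 0 and antiderivatives
I' = G v, J' = G u, the function w = −u I + v J has w' = −u' I + v' J (the terms from
differentiating I and J cancel), and differentiating once more leaves
w'' + p w' − q w = G (u v' − u' v). With p(R) = 1/R and G(R) = F(R)·R, the Wronskian identity
turns the right-hand side into F(R). The integrals converge at 0
because s·e₂(s) and s·φ₀(s) are bounded on (0,1].
-/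

open Set

theorem contDiffOn_two_of_hasDerivAt {s : Set ℝ} {f f' f'' : ℝ → ℝ} (hs : IsOpen s)
    (hf : ∀ x ∈ s, HasDerivAt f (f' x) x) (hf' : ∀ x ∈ s, HasDerivAt f' (f'' x) x)
    (hf'' : ContinuousOn f'' s) : ContDiffOn ℝ 2 f s := by
  have hf'_C1 : ContDiffOn ℝ 1 f' s := by
    rw [show (1 : WithTop ℕ∞) = 0 + 1 from rfl, contDiffOn_succ_iff_deriv_of_isOpen hs]
    refine ⟨fun x hx => (hf' x hx).differentiableAt.differentiableWithinAt, by simp, ?_⟩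
    exact contDiffOn_zero.mpr (hf''.congr fun x hx => (hf' x hx).deriv)
  rw [show (2 : WithTop ℕ∞) = 1 + 1 from rfl, contDiffOn_succ_iff_deriv_of_isOpen hs]
  exact ⟨fun x hx => (hf x hx).differentiableAt.differentiableWithinAt, by simp,
    hf'_C1.congr fun x hx => (hf x hx).deriv⟩

section VariationOfParameters

variable {s : Set ℝ} {p q G u u' v v' I J : ℝ → ℝ} {x : ℝ}

theorem hasDerivAt_neg_mul_add_mul
    (hu : HasDerivAt u (u' x) x) (hv : HasDerivAt v (v' x) x)
    (hI : HasDerivAt I (G x * v x) x) (hJ : HasDerivAt J (G x * u x) x) :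
    HasDerivAt (fun r => -u r * I r + v r * J r) (-u' x * I x + v' x * J x) x :=
  ((hu.fun_neg.mul hI).add (hv.mul hJ)).congr_deriv (by ring)

theorem hasDerivAt_neg_deriv_mul_add_deriv_mul
    (hu' : HasDerivAt u' (q x * u x - p x * u' x) x)
    (hv' : HasDerivAt v' (q x * v x - p x * v' x) x)
    (hI : HasDerivAt I (G x * v x) x) (hJ : HasDerivAt J (G x * u x) x) :
    HasDerivAt (fun r => -u' r * I r + v' r * J r)
      (q x * (-u x * I x + v x * J x) - p x * (-u' x * I x + v' x * J x)
        + G x * (u x * v' x - u' x * v x)) x :=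
  ((hu'.fun_neg.mul hI).add (hv'.mul hJ)).congr_deriv (by ring)

theorem contDiffOn_variationOfParameters (hs : IsOpen s) (hp : ContinuousOn p s)
    (hq : ContinuousOn q s) (hG : ContinuousOn G s)
    (hu : ∀ x ∈ s, HasDerivAt u (u' x) x)
    (hu' : ∀ x ∈ s, HasDerivAt u' (q x * u x - p x * u' x) x)
    (hv : ∀ x ∈ s, HasDerivAt v (v' x) x)
    (hv' : ∀ x ∈ s, HasDerivAt v' (q x * v x - p x * v' x) x)
    (hI : ∀ x ∈ s, HasDerivAt I (G x * v x) x) (hJ : ∀ x ∈ s, HasDerivAt J (G x * u x) x) :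
    ContDiffOn ℝ 2 (fun r => -u r * I r + v r * J r) s := by
  have hw : ∀ x ∈ s, HasDerivAt (fun r => -u r * I r + v r * J r) (-u' x * I x + v' x * J x) x :=
    fun x hx => hasDerivAt_neg_mul_add_mul (hu x hx) (hv x hx) (hI x hx) (hJ x hx)
  have hw' : ∀ x ∈ s, HasDerivAt (fun r => -u' r * I r + v' r * J r) _ x := fun x hx =>
    hasDerivAt_neg_deriv_mul_add_deriv_mul (hu' x hx) (hv' x hx) (hI x hx) (hJ x hx)
  refine contDiffOn_two_of_hasDerivAt hs hw hw' ?_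
  have hu_c := HasDerivAt.continuousOn hu
  have hu'_c := HasDerivAt.continuousOn hu'
  have hv_c := HasDerivAt.continuousOn hv
  have hv'_c := HasDerivAt.continuousOn hv'
  have hI_c := HasDerivAt.continuousOn hI
  have hJ_c := HasDerivAt.continuousOn hJ
  fun_prop

theorem variationOfParameters_ode (hs : IsOpen s)
    (hu : ∀ x ∈ s, HasDerivAt u (u' x) x)
    (hu' : ∀ x ∈ s, HasDerivAt u' (q x * u x - p x * u' x) x)
    (hv : ∀ x ∈ s, HasDerivAt v (v' x) x)
    (hv' : ∀ x ∈ s, HasDerivAt v' (q x * v x - p x * v' x) x)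
    (hI : ∀ x ∈ s, HasDerivAt I (G x * v x) x) (hJ : ∀ x ∈ s, HasDerivAt J (G x * u x) x)
    (hx : x ∈ s) :
    let w := fun r => -u r * I r + v r * J r
    deriv (deriv w) x + p x * deriv w x - q x * w x = G x * (u x * v' x - u' x * v x) := by
  intro w
  have hw : ∀ y ∈ s, HasDerivAt w (-u' y * I y + v' y * J y) y :=
    fun y hy => hasDerivAt_neg_mul_add_mul (hu y hy) (hv y hy) (hI y hy) (hJ y hy)
  have hw_deriv : deriv w =ᶠ[nhds x] fun r => -u' r * I r + v' r * J r :=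
    Filter.eventually_of_mem (hs.mem_nhds hx) fun y hy => (hw y hy).deriv
  rw [((hasDerivAt_neg_deriv_mul_add_deriv_mul (hu' x hx) (hv' x hx) (hI x hx)
    (hJ x hx)).congr_of_eventuallyEq hw_deriv).deriv, (hw x hx).deriv]
  ring

end VariationOfParameters

noncomputable def potential (R : ℝ) : ℝ := 1 / R ^ 2 - 8 / (1 + R ^ 2) ^ 2

noncomputable def phi0Deriv (R : ℝ) : ℝ := 2 * (1 - R ^ 2) / (1 + R ^ 2) ^ 2

noncomputable def e2Deriv (R : ℝ) : ℝ :=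
  ((R ^ 2 + 1) * (R ^ 4 + 6 * R ^ 2 + 1) - 4 * R ^ 2 * (R ^ 2 - 1) * Real.log R) /
    (2 * R ^ 2 * (R ^ 2 + 1) ^ 2)

theorem continuousOn_potential : ContinuousOn potential (Ioi 0) := by
  refine (continuousOn_const.div (continuousOn_pow 2) fun x hx => ?_).sub
    (continuousOn_const.div (by fun_prop) fun x _ => by positivity)
  exact pow_ne_zero 2 (ne_of_gt hx)

theorem hasDerivAt_phi0 (x : ℝ) : HasDerivAt phi0 (phi0Deriv x) x := by
  have h := ((hasDerivAt_id' x).const_mul 2).fun_div ((hasDerivAt_pow 2 x).const_add 1)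
    (by positivity : (1 + x ^ 2) ≠ 0)
  refine h.congr_deriv ?_
  rw [phi0Deriv]
  field_simp
  ring

theorem hasDerivAt_phi0Deriv {x : ℝ} (hx : x ≠ 0) :
    HasDerivAt phi0Deriv (potential x * phi0 x - x⁻¹ * phi0Deriv x) x := by
  have h := (((hasDerivAt_pow 2 x).const_sub 1).const_mul 2).fun_div
    (((hasDerivAt_pow 2 x).const_add 1).fun_pow 2) (by positivity : ((1 + x ^ 2) ^ 2) ≠ 0)
  refine h.congr_deriv ?_
  rw [phi0Deriv, phi0, potential]
  field_simp
  ring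

theorem hasDerivAt_e2fun {x : ℝ} (hx : 0 < x) : HasDerivAt e2fun (e2Deriv x) x := by
  have hN := ((hasDerivAt_pow 4 x).fun_add (((hasDerivAt_pow 2 x).const_mul 4).fun_mul
    (hasDerivAt_log hx.ne'))).sub_const 1
  have hD := ((hasDerivAt_id' x).const_mul 2).fun_mul ((hasDerivAt_pow 2 x).add_const 1)
  refine (hN.fun_div hD (by positivity)).congr_deriv ?_
  rw [e2Deriv]
  field_simp
  ring

theorem hasDerivAt_e2Deriv {x : ℝ} (hx : 0 < x) :
    HasDerivAt e2Deriv (potential x * e2fun x - x⁻¹ * e2Deriv x) x := by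
  have hN := (((hasDerivAt_pow 2 x).add_const 1).fun_mul
    (((hasDerivAt_pow 4 x).fun_add ((hasDerivAt_pow 2 x).const_mul 6)).add_const 1)).fun_sub
    ((((hasDerivAt_pow 2 x).const_mul 4).fun_mul ((hasDerivAt_pow 2 x).sub_const 1)).fun_mul
      (hasDerivAt_log hx.ne'))
  have hD := ((hasDerivAt_pow 2 x).const_mul 2).fun_mul
    (((hasDerivAt_pow 2 x).add_const 1).fun_pow 2)
  refine (hN.fun_div hD (by positivity)).congr_deriv ?_
  rw [e2Deriv, e2fun, potential]
  field_simp
  ring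

theorem wronskian_phi0_e2fun {x : ℝ} (hx : x ≠ 0) :
    x * (phi0 x / 2 * e2Deriv x - phi0Deriv x / 2 * e2fun x) = 1 := by
  rw [phi0, phi0Deriv, e2Deriv, e2fun]
  field_simp
  ring

theorem abs_mul_e2fun_le {s : ℝ} (hs : 0 < s) (hs1 : s ≤ 1) : |s * e2fun s| ≤ 3 := by
  have hlog := abs_le.mp (abs_log_mul_self_lt s hs hs1).le
  have hs4 : s ^ 4 ≤ 1 := pow_le_one₀ hs.le hs1
  have h_eq : s * e2fun s = (s ^ 4 + 4 * s * (log s * s) - 1) / (2 * (s ^ 2 + 1)) := by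
    rw [e2fun]
    field_simp
  rw [h_eq, abs_div, abs_of_pos (by positivity : (0 : ℝ) < 2 * (s ^ 2 + 1)),
    div_le_iff₀ (by positivity), abs_le]
  constructor <;> nlinarith

theorem abs_mul_phi0_div_two_le (s : ℝ) : |s * (phi0 s / 2)| ≤ 1 := by
  have h_eq : s * (phi0 s / 2) = s ^ 2 / (1 + s ^ 2) := by
    rw [phi0]
    field_simp
  rw [h_eq, abs_of_nonneg (by positivity), div_le_one (by positivity)]
  linarith

theorem intervalIntegrable_mul_of_abs_le {F g : ℝ → ℝ} {C R : ℝ} (hFc : ContinuousOn F (Ioi 0))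
    (hFi : IntegrableOn F (Ioc 0 1)) (hgc : ContinuousOn g (Ioi 0))
    (hg : ∀ s ∈ Ioc (0 : ℝ) 1, |g s| ≤ C) (hR : 0 < R) :
    IntervalIntegrable (fun s => F s * g s) volume 0 R := by
  have h01 : IntervalIntegrable (fun s => F s * g s) volume 0 1 := by
    rw [intervalIntegrable_iff_integrableOn_Ioc_of_le zero_le_one]
    exact hFi.mul_bdd ((hgc.mono Ioc_subset_Ioi_self).aestronglyMeasurable measurableSet_Ioc)
      (ae_restrict_of_forall_mem measurableSet_Ioc hg)
  have h1R : IntervalIntegrable (fun s => F s * g s) volume 1 R :=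
    ((hFc.mul hgc).mono fun x hx => (lt_min one_pos hR).trans_le hx.1).intervalIntegrable
  exact h01.trans h1R

theorem hasDerivAt_integral_mul_id_mul {F g : ℝ → ℝ} {C x : ℝ} (hFc : ContinuousOn F (Ioi 0))
    (hFi : IntegrableOn F (Ioc 0 1)) (hgc : ContinuousOn g (Ioi 0))
    (hg : ∀ s ∈ Ioc (0 : ℝ) 1, |s * g s| ≤ C) (hx : 0 < x) :
    HasDerivAt (fun r => ∫ s in (0 : ℝ)..r, F s * s * g s) (F x * x * g x) x := by
  have hcont : ContinuousOn (fun s => F s * s * g s) (Ioi 0) := (hFc.mul continuousOn_id).mul hgc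
  have hint : IntervalIntegrable (fun s => F s * s * g s) volume 0 x := by
    simpa only [mul_assoc] using intervalIntegrable_mul_of_abs_le (g := fun s => s * g s)
      hFc hFi (continuousOn_id.mul hgc) hg hx
  exact intervalIntegral.integral_hasDerivAt_right hint
    (hcont.stronglyMeasurableAtFilter isOpen_Ioi x hx) (hcont.continuousAt (isOpen_Ioi.mem_nhds hx))

/-- If F is continuous on (0,∞) and integrable on (0,1], then the
variation-of-parameters formula w is C² on (0,∞) and satisfies
w'' + w'/R − (1/R² − 8/(1+R²)²) w = F on (0,∞). -/
theorem stmt11 (F : ℝ → ℝ) (hFc : ContinuousOn F (Set.Ioi 0))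
    (hFi : IntegrableOn F (Set.Ioc 0 1)) :
    ContDiffOn ℝ 2 (greenSol F) (Set.Ioi 0) ∧
    ∀ R : ℝ, 0 < R →
      deriv (deriv (greenSol F)) R + deriv (greenSol F) R / R
        - (1/R^2 - 8/(1 + R^2)^2) * greenSol F R = F R := by
  have hu : ∀ x ∈ Ioi (0 : ℝ), HasDerivAt (fun r => phi0 r / 2) (phi0Deriv x / 2) x :=
    fun x _ => (hasDerivAt_phi0 x).div_const 2
  have hu' : ∀ x ∈ Ioi (0 : ℝ), HasDerivAt (fun r => phi0Deriv r / 2)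
      (potential x * (phi0 x / 2) - x⁻¹ * (phi0Deriv x / 2)) x :=
    fun x hx => ((hasDerivAt_phi0Deriv (ne_of_gt hx)).div_const 2).congr_deriv (by ring)
  have hv : ∀ x ∈ Ioi (0 : ℝ), HasDerivAt e2fun (e2Deriv x) x := fun x hx => hasDerivAt_e2fun hx
  have hv' : ∀ x ∈ Ioi (0 : ℝ), HasDerivAt e2Deriv
      (potential x * e2fun x - x⁻¹ * e2Deriv x) x := fun x hx => hasDerivAt_e2Deriv hx
  have hG : ContinuousOn (fun s => F s * s) (Ioi 0) := hFc.mul continuousOn_id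
  have hI : ∀ x ∈ Ioi (0 : ℝ), HasDerivAt (fun r => ∫ s in (0 : ℝ)..r, F s * s * e2fun s)
      (F x * x * e2fun x) x := fun x hx => hasDerivAt_integral_mul_id_mul hFc hFi
    (HasDerivAt.continuousOn hv) (fun s hs => abs_mul_e2fun_le hs.1 hs.2) hx
  have hJ : ∀ x ∈ Ioi (0 : ℝ), HasDerivAt (fun r => ∫ s in (0 : ℝ)..r, F s * s * (phi0 s / 2))
      (F x * x * (phi0 x / 2)) x := fun x hx => hasDerivAt_integral_mul_id_mul hFc hFi
    (HasDerivAt.continuousOn hu) (fun s _ => abs_mul_phi0_div_two_le s) hx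
  have hw : greenSol F = fun r => -(phi0 r / 2) * (∫ s in (0 : ℝ)..r, F s * s * e2fun s)
      + e2fun r * ∫ s in (0 : ℝ)..r, F s * s * (phi0 s / 2) := by
    funext r
    simp only [greenSol, mul_div_assoc]
  rw [hw]
  refine ⟨contDiffOn_variationOfParameters isOpen_Ioi
    (continuousOn_inv₀.mono fun x hx => ne_of_gt hx) continuousOn_potential hG hu hu' hv hv' hI hJ,
    fun R hR => ?_⟩
  have h_ode := variationOfParameters_ode isOpen_Ioi hu hu' hv hv' hI hJ hR
  rw [potential] at h_ode
  linear_combination h_ode + F R * wronskian_phi0_e2fun (ne_of_gt hR)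
end

section
/- Let λ > 0 and a, b ∈ ℝ, and define G(s) = −8·s·(a − b·log s)/( λ²·(1 + s²/λ²)² ) for s > 0. Then for every r > 0, −(1/2)·( (1/r)·∫₀^r s²·G(s) ds + r·∫ᵣ^∞ G(s) ds ) = (2a·λ²/r)·log(1 + r²/λ²) − (b·λ²/r)·( Li₂(−r²/λ²) + 2·log r·( log(1 + r²/λ²) − r²/(λ² + r²) ) + log(1 + r²/λ²) ) − r·b·( 2·λ²·log r/(λ² + r²) + log(1 + λ²/r²) ). -/
/-!
Both integrals are evaluated by the fundamental theorem of calculus with explicit primitives.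
The primitive of `s² G(s)` involves `Li₂(-s²/λ²)`, whose derivative is `-(2/s) log (1 + s²/λ²)`,
and is normalised to vanish at `0⁺`; the primitive `4λ²(a - b log s)/(λ² + s²) - 2b log (1 + λ²/s²)`
of `G` vanishes at `∞`. Integrability holds because `G` extends continuously to `0`
(`s log s → 0`) and `G = O(s⁻²)` at infinity.
-/

open Real MeasureTheory

/-- The dilogarithm Li₂(x) = ∫₀^x (−log(1−y)/y) dy, defined for x ≤ 1. -/
noncomputable def Li2 (x : ℝ) : ℝ := ∫ y in (0:ℝ)..x, -Real.log (1 - y) / y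

open Set Filter Topology Asymptotics

section Dilogarithm

lemma norm_neg_log_one_sub_div_le_one {y : ℝ} (hy : y ≤ 0) : ‖-log (1 - y) / y‖ ≤ 1 := by
  rcases hy.eq_or_lt with rfl | hy
  · simp
  have hlog : log (1 - y) ≤ -y := by linarith [log_le_sub_one_of_pos (x := 1 - y) (by linarith)]
  have hpos : 0 ≤ log (1 - y) := log_nonneg (by linarith)
  rw [← neg_div_neg_eq, neg_neg, norm_div, norm_of_nonneg hpos, norm_of_nonneg (by linarith)]
  exact div_le_one_of_le₀ hlog (by linarith)

lemma measurable_neg_log_one_sub_div : Measurable fun y : ℝ ↦ -log (1 - y) / y := by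
  fun_prop

lemma intervalIntegrable_neg_log_one_sub_div {x : ℝ} (hx : x ≤ 0) :
    IntervalIntegrable (fun y : ℝ ↦ -log (1 - y) / y) volume 0 x := by
  rw [intervalIntegrable_iff, uIoc_of_ge hx]
  refine Measure.integrableOn_of_bounded (M := 1) measure_Ioc_lt_top.ne
    measurable_neg_log_one_sub_div.aestronglyMeasurable ?_
  exact (ae_restrict_iff' measurableSet_Ioc).2
    (Eventually.of_forall fun y hy ↦ norm_neg_log_one_sub_div_le_one hy.2)

lemma abs_Li2_le {x : ℝ} (hx : x ≤ 0) : |Li2 x| ≤ |x| := by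
  have := intervalIntegral.norm_integral_le_of_norm_le_const (C := 1) (a := 0) (b := x)
    (f := fun y : ℝ ↦ -log (1 - y) / y) fun y hy ↦ by
      rw [uIoc_of_ge hx] at hy
      exact norm_neg_log_one_sub_div_le_one hy.2
  simpa [Li2] using this

lemma hasDerivAt_Li2 {x : ℝ} (hx : x < 0) : HasDerivAt Li2 (-log (1 - x) / x) x :=
  intervalIntegral.integral_hasDerivAt_right (intervalIntegrable_neg_log_one_sub_div hx.le)
    measurable_neg_log_one_sub_div.stronglyMeasurable.stronglyMeasurableAtFilter
    (((continuousAt_log (by linarith)).comp (by fun_prop)).neg.div continuousAt_id hx.ne)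

end Dilogarithm

section BubbleSource

variable (lam a b : ℝ)

-- The paper's `G(s) = ((cos (2 Q₁ (s/λ)) - 1)/s²) · s · (a - b log s)`, written out with
-- `cos (2 Q₁ x) - 1 = -8x²/(1 + x²)²` for the bubble `Q₁ x = 2 arctan x`.
noncomputable def bubbleSource (s : ℝ) : ℝ :=
  -8*s*(a - b*log s) / (lam^2 * (1 + s^2/lam^2)^2)

variable {lam}

lemma bubbleSource_eq (hlam : lam ≠ 0) (s : ℝ) :
    bubbleSource lam a b s = -8*lam^2*(a*s - b*(s*log s)) / (lam^2 + s^2)^2 := by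
  rw [bubbleSource]
  field_simp

-- `s ↦ s log s` is continuous at `0`, so the junk value `log 0 = 0` does no harm.
lemma continuous_bubbleSource (hlam : lam ≠ 0) : Continuous (bubbleSource lam a b) := by
  simp_rw [funext (bubbleSource_eq a b hlam)]
  exact Continuous.div (by fun_prop) (by fun_prop) fun s ↦ by positivity

lemma abs_sub_mul_log_le {s : ℝ} (hs : 1 ≤ s) : |a - b * log s| ≤ (|a| + |b|) * s := by
  have h0 : 0 ≤ log s := log_nonneg hs
  have h1 : log s ≤ s := log_le_self (by linarith)
  calc |a - b * log s| ≤ |a| + |b| * log s := by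
        simpa only [abs_mul, abs_of_nonneg h0] using abs_sub a (b * log s)
    _ ≤ |a| * s + |b| * s := by gcongr; nlinarith [abs_nonneg a]
    _ = _ := by ring

lemma bubbleSource_isBigO_atTop (hlam : lam ≠ 0) :
    bubbleSource lam a b =O[atTop] fun s ↦ s ^ (-2 : ℝ) := by
  refine IsBigO.of_bound (8 * lam^2 * (|a| + |b|)) ?_
  filter_upwards [eventually_ge_atTop 1] with s hs
  have hs0 : 0 < s := by linarith
  have hlog := abs_sub_mul_log_le a b hs
  have hnorm : ‖bubbleSource lam a b s‖ = 8 * lam^2 * s * |a - b * log s| / (lam^2 + s^2)^2 := by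
    rw [bubbleSource_eq a b hlam,
      show -8*lam^2*(a*s - b*(s*log s)) = -(8*lam^2*s)*(a - b*log s) by ring,
      Real.norm_eq_abs, abs_div, abs_mul, abs_neg, abs_of_nonneg (by positivity : 0 ≤ 8*lam^2*s),
      abs_of_nonneg (by positivity : 0 ≤ (lam^2 + s^2)^2)]
  rw [hnorm, rpow_neg hs0.le, rpow_two, norm_inv, norm_pow, norm_of_nonneg hs0.le]
  calc 8 * lam^2 * s * |a - b * log s| / (lam^2 + s^2)^2
      ≤ 8 * lam^2 * s * ((|a| + |b|) * s) / (s^2)^2 := by gcongr; nlinarith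
    _ = _ := by field_simp

lemma integrableOn_Ioi_bubbleSource (hlam : lam ≠ 0) (r : ℝ) :
    IntegrableOn (bubbleSource lam a b) (Ioi r) :=
  (((continuous_bubbleSource a b hlam).locallyIntegrable.locallyIntegrableOn _)
    |>.integrableOn_of_isBigO_atTop (bubbleSource_isBigO_atTop a b hlam)
      (integrableAtFilter_rpow_atTop_iff.2 (by norm_num))).mono_set Ioi_subset_Ici_self

end BubbleSource

section Primitives

variable (lam a b : ℝ)

noncomputable def innerPrimitive (s : ℝ) : ℝ :=
  2*lam^2*(b*Li2 (-(s^2/lam^2)) + 2*b*log s*(log (1 + s^2/lam^2) - s^2/(lam^2 + s^2))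
    + (b - 2*a)*log (1 + s^2/lam^2) + 2*a*(s^2/(lam^2 + s^2)))

noncomputable def outerPrimitive (s : ℝ) : ℝ :=
  4*lam^2*(a - b*log s)/(lam^2 + s^2) - 2*b*log (1 + lam^2/s^2)

variable {lam}

lemma hasDerivAt_innerPrimitive (hlam : lam ≠ 0) {s : ℝ} (hs : 0 < s) :
    HasDerivAt (innerPrimitive lam a b) (s^2 * bubbleSource lam a b s) s := by
  have hsq := (hasDerivAt_pow 2 s).div_const (lam^2)
  have hLi2 := (hasDerivAt_Li2 (neg_lt_zero.2 (by positivity : 0 < s^2/lam^2))).comp s hsq.neg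
  have hL := (hsq.const_add 1).log (by positivity)
  have hfrac :=
    (hasDerivAt_pow 2 s).fun_div ((hasDerivAt_pow 2 s).const_add (lam^2)) (by positivity)
  have h := ((((hLi2.const_mul b).add (((hasDerivAt_log hs.ne').const_mul (2*b)).mul
    (hL.sub hfrac))).add (hL.const_mul (b - 2*a))).add (hfrac.const_mul (2*a))).const_mul (2*lam^2)
  refine h.congr_deriv ?_
  simp only [bubbleSource, Pi.sub_apply, sub_neg_eq_add]
  field_simp
  ring

lemma hasDerivAt_outerPrimitive (hlam : lam ≠ 0) {s : ℝ} (hs : 0 < s) :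
    HasDerivAt (outerPrimitive lam a b) (bubbleSource lam a b s) s := by
  have hD := (hasDerivAt_pow 2 s).const_add (lam^2)
  have hq :=
    ((hasDerivAt_const s (lam^2)).fun_div (hasDerivAt_pow 2 s) (pow_pos hs 2).ne').const_add 1
  have h := ((((hasDerivAt_log hs.ne').const_mul b).const_sub a).const_mul (4*lam^2)).div hD
    (by positivity) |>.sub ((hq.log (by positivity)).const_mul (2*b))
  refine h.congr_deriv ?_
  simp only [bubbleSource]
  field_simp
  ring

end Primitives

section Limits

variable (a b : ℝ) {lam : ℝ}

lemma abs_log_one_add_sub_div_le {u : ℝ} (hu : 0 ≤ u) : |log (1 + u) - u / (1 + u)| ≤ u := by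
  have hlower : u / (1 + u) ≤ log (1 + u) := by
    have := one_sub_inv_le_log_of_pos (x := 1 + u) (by positivity)
    rwa [show 1 - (1 + u)⁻¹ = u / (1 + u) by field_simp; ring] at this
  have hupper : log (1 + u) ≤ u := by linarith [log_le_sub_one_of_pos (x := 1 + u) (by positivity)]
  have hnonneg : 0 ≤ u / (1 + u) := by positivity
  rw [abs_of_nonneg (by linarith)]
  linarith

lemma tendsto_innerPrimitive_nhdsGT_zero (hlam : lam ≠ 0) :
    Tendsto (innerPrimitive lam a b) (𝓝[>] 0) (𝓝 0) := by
  have hcont : ∀ f : ℝ → ℝ, Continuous f → Tendsto f (𝓝[>] 0) (𝓝 (f 0)) :=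
    fun f hf ↦ (hf.tendsto 0).mono_left nhdsWithin_le_nhds
  have hu := hcont (fun s ↦ s^2/lam^2) (by fun_prop)
  have hL := hcont (fun s ↦ log (1 + s^2/lam^2)) (by fun_prop (disch := intro; positivity))
  have hfrac := hcont (fun s ↦ s^2/(lam^2 + s^2)) (by fun_prop (disch := intro; positivity))
  have hLi2 : Tendsto (fun s ↦ Li2 (-(s^2/lam^2))) (𝓝[>] 0) (𝓝 0) := by
    refine squeeze_zero_norm (fun s ↦ ?_) (by simpa using hu)
    simpa [abs_of_nonneg (by positivity : 0 ≤ s^2/lam^2)] using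
      abs_Li2_le (neg_nonpos.2 (by positivity : 0 ≤ s^2/lam^2))
  -- `log(1 + u) - u/(1 + u) = O(u)` with `u = s²/λ²` beats the logarithmic singularity.
  have hlog : Tendsto (fun s ↦ log s * (log (1 + s^2/lam^2) - s^2/(lam^2 + s^2)))
      (𝓝[>] 0) (𝓝 0) := by
    have hsq_log := hcont (fun s ↦ |s * (s * log s)| / lam^2) (by fun_prop)
    refine squeeze_zero_norm (a := fun s ↦ |s * (s * log s)| / lam^2) (fun s ↦ ?_)
      (by simpa using hsq_log)
    have h := abs_log_one_add_sub_div_le (by positivity : 0 ≤ s^2/lam^2)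
    rw [show s^2/lam^2/(1 + s^2/lam^2) = s^2/(lam^2 + s^2) by field_simp] at h
    calc ‖log s * (log (1 + s^2/lam^2) - s^2/(lam^2 + s^2))‖ ≤ |log s| * (s^2/lam^2) := by
          rw [norm_mul, Real.norm_eq_abs, Real.norm_eq_abs]; gcongr
      _ = |s * (s * log s)| / lam^2 := by rw [abs_mul, abs_mul, ← sq_abs s]; ring
  unfold innerPrimitive
  simpa [mul_assoc] using ((((hLi2.const_mul b).add ((hlog.const_mul (2*b)))).add
    (hL.const_mul (b - 2*a))).add (hfrac.const_mul (2*a))).const_mul (lam^2) |>.const_mul 2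

lemma tendsto_outerPrimitive_atTop :
    Tendsto (outerPrimitive lam a b) atTop (𝓝 0) := by
  have hquot : Tendsto (fun s ↦ (a - b*log s)/(lam^2 + s^2)) atTop (𝓝 0) := by
    refine squeeze_zero_norm' (a := fun s ↦ (|a| + |b|) / s) ?_
      (tendsto_const_nhds.div_atTop tendsto_id)
    filter_upwards [eventually_ge_atTop 1] with s hs
    have hs0 : 0 < s := by linarith
    rw [norm_div, Real.norm_eq_abs, norm_of_nonneg (by positivity)]
    calc |a - b*log s| / (lam^2 + s^2) ≤ (|a| + |b|) * s / s^2 := by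
          gcongr
          · exact abs_sub_mul_log_le a b hs
          · nlinarith
      _ = (|a| + |b|) / s := by field_simp
  have hlog : Tendsto (fun s ↦ log (1 + lam^2/s^2)) atTop (𝓝 0) := by
    have h := (tendsto_const_nhds (x := lam^2)).div_atTop (tendsto_pow_atTop two_ne_zero)
    simpa [Function.comp_def] using ((continuousAt_log (by norm_num)).tendsto.comp (h.const_add 1))
  unfold outerPrimitive
  simpa [mul_div_assoc] using
    (hquot.const_mul (4*lam^2)).sub (hlog.const_mul (2*b))

end Limits

section Integrals

variable (a b : ℝ) {lam r : ℝ}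

lemma integral_sq_mul_bubbleSource (hlam : lam ≠ 0) (hr : 0 < r) :
    ∫ s in (0:ℝ)..r, s^2 * bubbleSource lam a b s = innerPrimitive lam a b r := by
  have hderiv {s : ℝ} (hs : 0 < s) := hasDerivAt_innerPrimitive a b hlam hs
  simpa using intervalIntegral.integral_eq_sub_of_hasDerivAt_of_tendsto hr
    (fun s hs ↦ hderiv hs.1)
    (((continuous_pow 2).mul (continuous_bubbleSource a b hlam)).intervalIntegrable 0 r)
    (tendsto_innerPrimitive_nhdsGT_zero a b hlam)
    ((hderiv hr).continuousAt.tendsto.mono_left nhdsWithin_le_nhds)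

lemma integral_Ioi_bubbleSource (hlam : lam ≠ 0) (hr : 0 < r) :
    ∫ s in Ioi r, bubbleSource lam a b s = -outerPrimitive lam a b r := by
  rw [integral_Ioi_of_hasDerivAt_of_tendsto'
    (fun s hs ↦ hasDerivAt_outerPrimitive a b hlam (hr.trans_le hs))
    (integrableOn_Ioi_bubbleSource a b hlam r) (tendsto_outerPrimitive_atTop a b), zero_sub]

end Integrals

/-- Explicit evaluation of the Green's-function solution of u'' + u'/r − u/r² = G
for G(s) = −8s(a − b log s)/(λ²(1 + s²/λ²)²). -/
theorem stmt18 (lam a b : ℝ) (hlam : 0 < lam) (r : ℝ) (hr : 0 < r) :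
    -(1/2) * ((1/r) * (∫ s in (0:ℝ)..r,
          s^2 * (-8*s*(a - b*Real.log s) / (lam^2 * (1 + s^2/lam^2)^2)))
        + r * (∫ s in Set.Ioi r,
          -8*s*(a - b*Real.log s) / (lam^2 * (1 + s^2/lam^2)^2)))
      = (2*a*lam^2/r) * Real.log (1 + r^2/lam^2)
        - (b*lam^2/r) * (Li2 (-(r^2/lam^2))
            + 2*Real.log r * (Real.log (1 + r^2/lam^2) - r^2/(lam^2 + r^2))
            + Real.log (1 + r^2/lam^2))
        - r*b * (2*lam^2*Real.log r/(lam^2 + r^2) + Real.log (1 + lam^2/r^2)) := by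
  have hinner := integral_sq_mul_bubbleSource a b hlam.ne' hr
  have houter := integral_Ioi_bubbleSource a b hlam.ne' hr
  simp only [bubbleSource] at hinner houter
  rw [hinner, houter, innerPrimitive, outerPrimitive]
  field_simp
  ring
end
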